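/- Each of the twelve points (1:0:0), (0:1:0), (0:0:1), (1:1:1), (1:ω̄:ω), (1:ω:ω̄), (ω̄:1:1), (1:1:ω̄), (1:ω̄:1), (1:ω:1), (ω:1:1), (1:1:ω) (ω = e^{2πi/3}) is a singular point of multiplicity at least 3 of the curve of degree 10 given by (2x+2y-z)(x³-y³)(y³-z³)(z³-x³) = 0; that is, all partial derivatives of this polynomial up to order 2 vanish at each of these points. -/
import Mathlib


noncomputable section

open MvPolynomial

/-- ω = e^{2πi/3}. -/
noncomputable def w : ℂ := Complex.exp (2 * Real.pi * Complex.I / 3)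

/-- Homogeneous coordinate representatives of the twelve triple points. -/
noncomputable def triplePts : Fin 12 → (Fin 3 → ℂ) :=
  ![![1,0,0], ![0,1,0], ![0,0,1],
    ![1,1,1], ![1,w^2,w], ![1,w,w^2],
    ![w^2,1,1], ![1,1,w^2], ![1,w^2,1],
    ![1,w,1], ![w,1,1], ![1,1,w]]

/-- The degree-10 polynomial (2x+2y-z)(x³-y³)(y³-z³)(z³-x³), defining the
union of the dual Hesse arrangement with the line 2x+2y=z. -/
noncomputable def Fcurve : MvPolynomial (Fin 3) ℂ :=
  (2 * X 0 + 2 * X 1 - X 2) * ((X 0)^3 - (X 1)^3) *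
    ((X 1)^3 - (X 2)^3) * ((X 2)^3 - (X 0)^3)

/-- ω is a cube root of unity. -/
lemma hw3 : w ^ 3 = 1 := by
  rw [w, ← Complex.exp_nat_mul]
  rw [show ((3:ℕ) : ℂ) * (2 * Real.pi * Complex.I / 3) = 2 * Real.pi * Complex.I by ring]
  exact Complex.exp_two_pi_mul_I

/-- The point `p` has multiplicity at least 3 on `F = 0`. -/
def Mult3 (p : Fin 3 → ℂ) (F : MvPolynomial (Fin 3) ℂ) : Prop :=
  eval p F = 0 ∧ (∀ i, eval p (pderiv i F) = 0) ∧
    (∀ i j, eval p (pderiv i (pderiv j F)) = 0)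

lemma mult3_mul_right {p : Fin 3 → ℂ} {F : MvPolynomial (Fin 3) ℂ}
    (h : Mult3 p F) (B : MvPolynomial (Fin 3) ℂ) : Mult3 p (F * B) := by
  obtain ⟨h0, h1, h2⟩ := h
  refine ⟨?_, fun i => ?_, fun i j => ?_⟩ <;>
    simp [pderiv_mul, h0, h1, h2]

lemma mult3_mul_left {p : Fin 3 → ℂ} {F : MvPolynomial (Fin 3) ℂ}
    (h : Mult3 p F) (B : MvPolynomial (Fin 3) ℂ) : Mult3 p (B * F) := by
  obtain ⟨h0, h1, h2⟩ := h
  refine ⟨?_, fun i => ?_, fun i j => ?_⟩ <;>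
    simp [pderiv_mul, h0, h1, h2]

lemma mult3_three {p : Fin 3 → ℂ} {A B C : MvPolynomial (Fin 3) ℂ}
    (hA : eval p A = 0) (hB : eval p B = 0) (hC : eval p C = 0) :
    Mult3 p (A * B * C) := by
  refine ⟨?_, fun i => ?_, fun i j => ?_⟩ <;>
    simp [pderiv_mul, hA, hB, hC]

lemma cube_mult3 (p : Fin 3 → ℂ) (a b : Fin 3) (ha : p a = 0) (hb : p b = 0) :
    Mult3 p ((X a) ^ 3 - (X b) ^ 3) := by
  refine ⟨?_, fun i => ?_, fun i j => ?_⟩ <;>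
    simp [pderiv_mul, pow_succ, ha, hb]

/-- If all coordinates of `p` are cube roots of unity, `p` is a triple point. -/
lemma unity_mult3 (p : Fin 3 → ℂ) (h : ∀ i, (p i) ^ 3 = 1) : Mult3 p Fcurve := by
  have hF : Fcurve = (2 * X 0 + 2 * X 1 - X 2) *
      (((X 0)^3 - (X 1)^3) * ((X 1)^3 - (X 2)^3) * ((X 2)^3 - (X 0)^3)) := by
    unfold Fcurve; ring
  rw [hF]
  refine mult3_mul_left (mult3_three ?_ ?_ ?_) _ <;> simp [h]

/-- Each of the twelve triple points of the dual Hesse arrangement is a point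
of multiplicity at least 3 of the curve (2x+2y-z)(x³-y³)(y³-z³)(z³-x³) = 0:
the polynomial and all its partial derivatives of orders 1 and 2 vanish
there. -/
theorem stmt_13 :
    ∀ k : Fin 12,
      eval (triplePts k) Fcurve = 0 ∧
      (∀ i : Fin 3, eval (triplePts k) (pderiv i Fcurve) = 0) ∧
      (∀ i j : Fin 3, eval (triplePts k) (pderiv i (pderiv j Fcurve)) = 0) := by
  have hw6 : w ^ 6 = 1 := by
    have h : w ^ 6 = (w ^ 3) ^ 2 := by ring
    rw [h, hw3]; norm_num
  have h23 : (w ^ 2) ^ 3 = 1 := by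
    rw [← pow_mul]; norm_num [hw6]
  have key : ∀ k : Fin 12, Mult3 (triplePts k) Fcurve := by
    intro k
    fin_cases k
    · -- (1,0,0): (y³-z³) has a triple zero
      show Mult3 ![(1:ℂ),0,0] Fcurve
      have h := cube_mult3 ![(1:ℂ),0,0] 1 2 (by simp) (by simp)
      have hF : Fcurve = ((X 1)^3 - (X 2)^3) *
          ((2 * X 0 + 2 * X 1 - X 2) * ((X 0)^3 - (X 1)^3) * ((X 2)^3 - (X 0)^3)) := by
        unfold Fcurve; ring
      rw [hF]
      exact mult3_mul_right h _
    · -- (0,1,0): (z³-x³) has a triple zero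
      show Mult3 ![(0:ℂ),1,0] Fcurve
      have h := cube_mult3 ![(0:ℂ),1,0] 2 0 (by simp) (by simp)
      have hF : Fcurve = ((X 2)^3 - (X 0)^3) *
          ((2 * X 0 + 2 * X 1 - X 2) * ((X 0)^3 - (X 1)^3) * ((X 1)^3 - (X 2)^3)) := by
        unfold Fcurve; ring
      rw [hF]
      exact mult3_mul_right h _
    · -- (0,0,1): (x³-y³) has a triple zero
      show Mult3 ![(0:ℂ),0,1] Fcurve
      have h := cube_mult3 ![(0:ℂ),0,1] 0 1 (by simp) (by simp)
      have hF : Fcurve = ((X 0)^3 - (X 1)^3) *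
          ((2 * X 0 + 2 * X 1 - X 2) * ((X 1)^3 - (X 2)^3) * ((X 2)^3 - (X 0)^3)) := by
        unfold Fcurve; ring
      rw [hF]
      exact mult3_mul_right h _
    -- remaining nine points: all coordinates are cube roots of unity
    · exact unity_mult3 ![1,1,1] (fun i => by fin_cases i <;> simp)
    · exact unity_mult3 ![1,w^2,w] (fun i => by fin_cases i <;> simp [hw3, h23])
    · exact unity_mult3 ![1,w,w^2] (fun i => by fin_cases i <;> simp [hw3, h23])
    · exact unity_mult3 ![w^2,1,1] (fun i => by fin_cases i <;> simp [hw3, h23])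
    · exact unity_mult3 ![1,1,w^2] (fun i => by fin_cases i <;> simp [hw3, h23])
    · exact unity_mult3 ![1,w^2,1] (fun i => by fin_cases i <;> simp [hw3, h23])
    · exact unity_mult3 ![1,w,1] (fun i => by fin_cases i <;> simp [hw3, h23])
    · exact unity_mult3 ![w,1,1] (fun i => by fin_cases i <;> simp [hw3, h23])
    · exact unity_mult3 ![1,1,w] (fun i => by fin_cases i <;> simp [hw3, h23])
  exact key
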